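/- arXiv:2105.08344 — 2 statements merged into one kernel-verified Lean document; each statement's English description precedes it below -/
import Mathlib

section
/- Let U, U' ⊆ ℝ^N be nonempty sets such that d_H(U ∩ B_R, U' ∩ B_R)/R → 0 as R → +∞. Then B(U) = B(U') and U(U) = U(U'). -/
/-!
Along a ray `τ ↦ τ • ξ`, a point of `U` nearly realising `infDist (τ • ξ) U` lies in a ball of
radius `O(τ)`, inside which `U` and `U'` are `o(τ)`-close in the Hausdorff distance. Hence
`infDist (τ • ξ) U / τ` and `infDist (τ • ξ) U' / τ` differ by a quantity tending to `0`, so they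
have the same `liminf` and tend to `0` simultaneously.
-/

open Filter Metric Topology

theorem Filter.liminf_le_liminf_of_tendsto_sub {ι : Type*} {l : Filter ι} [l.NeBot]
    {f g : ι → ℝ} (hfg : Tendsto (fun i => g i - f i) l (𝓝 0))
    (hf : IsBoundedUnder (· ≥ ·) l f) (hf' : IsCoboundedUnder (· ≥ ·) l f) :
    liminf f l ≤ liminf g l := by
  have h := le_liminf_add hfg.isBoundedUnder_ge hfg.isBoundedUnder_le hf hf'
  rwa [hfg.liminf_eq, zero_add, show (fun i => g i - f i) + f = g from
    funext fun i => sub_add_cancel (g i) (f i)] at h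

namespace Metric

variable {X : Type*} [PseudoMetricSpace X]

theorem infDist_le_infDist_add_hausdorffDist_inter_ball {x c : X} {s t : Set X} {R : ℝ}
    (hs : s.Nonempty) (hR : dist x c + infDist x s < R)
    (hfin : hausdorffEDist (s ∩ ball c R) (t ∩ ball c R) ≠ ⊤) :
    infDist x t ≤ infDist x s + hausdorffDist (s ∩ ball c R) (t ∩ ball c R) := by
  refine le_of_forall_pos_lt_add fun δ hδ => ?_
  obtain ⟨u, hu, hxu⟩ := (infDist_lt_iff hs).1
    (lt_add_of_pos_right (infDist x s) (lt_min hδ (sub_pos.2 hR)))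
  have hu' : u ∈ s ∩ ball c R := by
    refine ⟨hu, mem_ball.2 ?_⟩
    linarith [dist_triangle_left u c x, min_le_right δ (R - (dist x c + infDist x s))]
  have ht : (t ∩ ball c R).Nonempty :=
    nonempty_of_hausdorffEDist_ne_top (Set.nonempty_of_mem hu') hfin
  calc infDist x t ≤ infDist x (t ∩ ball c R) :=
        infDist_le_infDist_of_subset Set.inter_subset_left ht
    _ ≤ infDist x (s ∩ ball c R) + hausdorffDist (s ∩ ball c R) (t ∩ ball c R) :=
        infDist_le_infDist_add_hausdorffDist hfin
    _ ≤ dist x u + hausdorffDist (s ∩ ball c R) (t ∩ ball c R) := by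
        gcongr; exact infDist_le_dist_of_mem hu'
    _ < infDist x s + hausdorffDist (s ∩ ball c R) (t ∩ ball c R) + δ := by
        linarith [min_le_left δ (R - (dist x c + infDist x s))]

end Metric

section RayDistance

variable {E : Type*} [SeminormedAddCommGroup E]

def HausdorffSublinear (U V : Set E) : Prop :=
  ∀ ε : ℝ, 0 < ε → ∃ R₀ : ℝ, ∀ R : ℝ, R₀ ≤ R →
    hausdorffEDist (U ∩ ball 0 R) (V ∩ ball 0 R) ≤ ENNReal.ofReal (ε * R)

theorem HausdorffSublinear.symm {U V : Set E} (h : HausdorffSublinear U V) :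
    HausdorffSublinear V U := by
  intro ε hε
  obtain ⟨R₀, hR₀⟩ := h ε hε
  exact ⟨R₀, fun R hR => hausdorffEDist_comm.trans_le (hR₀ R hR)⟩

variable [NormedSpace ℝ E]

theorem infDist_smul_le {U : Set E} {u : E} (hu : u ∈ U) (ξ : E) {τ : ℝ} (hτ : 0 ≤ τ) :
    infDist (τ • ξ) U ≤ τ * ‖ξ‖ + ‖u‖ :=
  calc infDist (τ • ξ) U ≤ dist (τ • ξ) u := infDist_le_dist_of_mem hu
    _ ≤ ‖τ • ξ‖ + ‖u‖ := dist_le_norm_add_norm _ _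
    _ = τ * ‖ξ‖ + ‖u‖ := by rw [norm_smul, Real.norm_of_nonneg hτ]

theorem isBoundedUnder_ge_infDist_smul_div (U : Set E) (ξ : E) :
    IsBoundedUnder (· ≥ ·) atTop fun τ : ℝ => infDist (τ • ξ) U / τ :=
  isBoundedUnder_of_eventually_ge <| (eventually_ge_atTop 0).mono fun _ hτ =>
    div_nonneg infDist_nonneg hτ

theorem isBoundedUnder_le_infDist_smul_div {U : Set E} (hU : U.Nonempty) (ξ : E) :
    IsBoundedUnder (· ≤ ·) atTop fun τ : ℝ => infDist (τ • ξ) U / τ := by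
  obtain ⟨u, hu⟩ := hU
  refine isBoundedUnder_of_eventually_le (a := ‖ξ‖ + ‖u‖) <|
    (eventually_ge_atTop 1).mono fun τ hτ => ?_
  have hτ0 : 0 < τ := one_pos.trans_le hτ
  rw [div_le_iff₀ hτ0]
  nlinarith [infDist_smul_le hu ξ hτ0.le, norm_nonneg u]

theorem HausdorffSublinear.eventually_infDist_smul_le {U V : Set E} (h : HausdorffSublinear U V)
    (hU : U.Nonempty) (ξ : E) {ε : ℝ} (hε : 0 < ε) :
    ∀ᶠ τ : ℝ in atTop, infDist (τ • ξ) V ≤ infDist (τ • ξ) U + ε * τ := by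
  obtain ⟨u, hu⟩ := hU
  -- the ball of radius `K * τ` contains the near-nearest points of `U` to `τ • ξ`
  set K := 2 * ‖ξ‖ + 1
  have hK : 0 < K := by positivity
  obtain ⟨R₀, hR₀⟩ := h (ε / K) (div_pos hε hK)
  filter_upwards [eventually_ge_atTop (‖u‖ + 1), eventually_ge_atTop (R₀ / K)] with τ hτu hτR₀
  have hτ : 0 ≤ τ := by linarith [norm_nonneg u]
  have hR : dist (τ • ξ) 0 + infDist (τ • ξ) U < K * τ := by
    rw [dist_zero_right, norm_smul, Real.norm_of_nonneg hτ]
    linarith [infDist_smul_le hu ξ hτ]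
  have hclose := hR₀ (K * τ) (by rwa [← div_le_iff₀' hK])
  have hdist : hausdorffDist (U ∩ ball 0 (K * τ)) (V ∩ ball 0 (K * τ)) ≤ ε * τ := by
    have hεR : ε / K * (K * τ) = ε * τ := by field_simp
    rw [← hεR]
    exact ENNReal.toReal_le_of_le_ofReal (by positivity) hclose
  linarith [infDist_le_infDist_add_hausdorffDist_inter_ball ⟨u, hu⟩ hR
    (ne_top_of_le_ne_top ENNReal.ofReal_ne_top hclose)]

theorem HausdorffSublinear.tendsto_infDist_smul_div_sub {U V : Set E}
    (h : HausdorffSublinear U V) (hU : U.Nonempty) (hV : V.Nonempty) (ξ : E) :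
    Tendsto (fun τ : ℝ => infDist (τ • ξ) V / τ - infDist (τ • ξ) U / τ) atTop (𝓝 0) := by
  refine Metric.tendsto_nhds.2 fun ε hε => ?_
  filter_upwards [h.eventually_infDist_smul_le hU ξ (half_pos hε),
    h.symm.eventually_infDist_smul_le hV ξ (half_pos hε), eventually_gt_atTop 0]
    with τ hVU hUV hτ
  rw [Real.dist_eq, sub_zero, abs_sub_lt_iff, ← sub_div, ← sub_div, div_lt_iff₀ hτ,
    div_lt_iff₀ hτ]
  constructor <;> linarith [mul_pos hε hτ]

end RayDistance

theorem boundedDirs_unboundedDirs_eq_of_local_hausdorff_general (N : ℕ)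
    (U U' : Set (EuclideanSpace ℝ (Fin N))) (hU : U.Nonempty) (hU' : U'.Nonempty)
    (h : ∀ ε : ℝ, 0 < ε → ∃ R₀ : ℝ, ∀ R : ℝ, R₀ ≤ R →
      EMetric.hausdorffEdist (U ∩ Metric.ball 0 R) (U' ∩ Metric.ball 0 R)
        ≤ ENNReal.ofReal (ε * R)) :
    ∀ ξ : EuclideanSpace ℝ (Fin N), ‖ξ‖ = 1 →
      ((0 < Filter.liminf (fun τ : ℝ => Metric.infDist (τ • ξ) U / τ) Filter.atTop) ↔
        (0 < Filter.liminf (fun τ : ℝ => Metric.infDist (τ • ξ) U' / τ) Filter.atTop)) ∧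
      ((Filter.Tendsto (fun τ : ℝ => Metric.infDist (τ • ξ) U / τ) Filter.atTop (nhds 0)) ↔
        (Filter.Tendsto (fun τ : ℝ => Metric.infDist (τ • ξ) U' / τ) Filter.atTop (nhds 0))) := by
  intro ξ _
  have hUU' : HausdorffSublinear U U' := h
  have h₁ := hUU'.tendsto_infDist_smul_div_sub hU hU' ξ
  have h₂ := hUU'.symm.tendsto_infDist_smul_div_sub hU' hU ξ
  refine ⟨⟨fun hpos => hpos.trans_le ?_, fun hpos => hpos.trans_le ?_⟩,
    ⟨fun h0 => by simpa using h0.add h₁, fun h0 => by simpa using h0.add h₂⟩⟩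
  · exact liminf_le_liminf_of_tendsto_sub h₁ (isBoundedUnder_ge_infDist_smul_div U ξ)
      (isBoundedUnder_le_infDist_smul_div hU ξ).isCoboundedUnder_ge
  · exact liminf_le_liminf_of_tendsto_sub h₂ (isBoundedUnder_ge_infDist_smul_div U' ξ)
      (isBoundedUnder_le_infDist_smul_div hU' ξ).isCoboundedUnder_ge

/-- if `d_H(U ∩ B_R, U' ∩ B_R)/R → 0` as `R → +∞`, then `B(U) = B(U')`
and `U(U) = U(U')`. -/
theorem boundedDirs_unboundedDirs_eq_of_local_hausdorff (N : ℕ) (hN : 1 ≤ N)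
    (U U' : Set (EuclideanSpace ℝ (Fin N))) (hU : U.Nonempty) (hU' : U'.Nonempty)
    (h : ∀ ε : ℝ, 0 < ε → ∃ R₀ : ℝ, ∀ R : ℝ, R₀ ≤ R →
      EMetric.hausdorffEdist (U ∩ Metric.ball 0 R) (U' ∩ Metric.ball 0 R)
        ≤ ENNReal.ofReal (ε * R)) :
    ∀ ξ : EuclideanSpace ℝ (Fin N), ‖ξ‖ = 1 →
      ((0 < Filter.liminf (fun τ : ℝ => Metric.infDist (τ • ξ) U / τ) Filter.atTop) ↔
        (0 < Filter.liminf (fun τ : ℝ => Metric.infDist (τ • ξ) U' / τ) Filter.atTop)) ∧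
      ((Filter.Tendsto (fun τ : ℝ => Metric.infDist (τ • ξ) U / τ) Filter.atTop (nhds 0)) ↔
        (Filter.Tendsto (fun τ : ℝ => Metric.infDist (τ • ξ) U' / τ) Filter.atTop (nhds 0))) :=
  boundedDirs_unboundedDirs_eq_of_local_hausdorff_general N U U' hU hU' h
end

section
/- Suppose f ∈ C¹([0,1]), f(0) = f(1) = 0, and there exist c₀ > 0 and φ₀ ∈ C²(ℝ) solving φ₀'' + c₀φ₀' + f(φ₀) = 0 with φ₀(−∞) = 1 > φ₀ > φ₀(+∞) = 0. Then ∫_t¹ f(s) ds > 0 for every t ∈ [0,1). -/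
open Filter Topology Set

/-!
Multiply the equation by `φ₀'`: the energy `E = φ₀'² / 2 - ∫_{φ₀}^1 f` satisfies
`E' = -c₀ φ₀'² ≤ 0`. Since `φ₀` is bounded, `φ₀'` becomes arbitrarily small near `-∞`, where
also `∫_{φ₀}^1 f → 0`, so `E ≤ 0`; and `E < 0` because `φ₀` is not constant near `-∞`.
At a point where `φ₀ = t` this gives `∫_t^1 f ≥ -E > 0`; the case `t = 0` follows by letting
`z → +∞`, using that `E` decreases.
-/

lemma tendsto_integral_comp_of_continuousOn {α : Type*} {l : Filter α} {f : ℝ → ℝ}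
    {φ : α → ℝ} {a b t : ℝ} (hf : ContinuousOn f (Icc a b)) (ht : t ∈ Icc a b)
    (hφ : Tendsto φ l (𝓝 t)) (hmem : ∀ᶠ z in l, φ z ∈ Icc a b) :
    Tendsto (fun z => ∫ s in φ z..b, f s) l (𝓝 (∫ s in t..b, f s)) := by
  have hab : a ≤ b := ht.1.trans ht.2
  have hcont := intervalIntegral.continuousOn_primitive_interval_left
    (μ := MeasureTheory.volume) (by rw [uIcc_of_le hab]; exact hf.integrableOn_Icc)
  rw [uIcc_of_le hab] at hcont
  exact (hcont t ht).tendsto.comp (tendsto_nhdsWithin_iff.2 ⟨hφ, hmem⟩)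

lemma exists_lt_abs_deriv_lt_of_forall_mem_Ioo {φ : ℝ → ℝ} {a b ε : ℝ}
    (hφ : Differentiable ℝ φ) (hrange : ∀ z, φ z ∈ Ioo a b) (hε : 0 < ε) (W : ℝ) :
    ∃ w < W, |deriv φ w| < ε := by
  have hL : 0 < (b - a) / ε := div_pos (by linarith [(hrange W).1, (hrange W).2]) hε
  obtain ⟨w, hw, hslope⟩ := exists_deriv_eq_slope φ (sub_lt_self W hL)
    hφ.continuous.continuousOn hφ.differentiableOn
  refine ⟨w, hw.2, ?_⟩
  rw [hslope, sub_sub_cancel, abs_div, abs_of_pos hL, div_lt_iff₀ hL, mul_div_cancel₀ _ hε.ne']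
  obtain ⟨h₁, h₂⟩ := hrange W
  obtain ⟨h₃, h₄⟩ := hrange (W - (b - a) / ε)
  rw [abs_lt]
  constructor <;> linarith

lemma exists_lt_deriv_ne_zero_of_tendsto_atBot {φ : ℝ → ℝ} {l z : ℝ}
    (hφ : Differentiable ℝ φ) (hlim : Tendsto φ atBot (𝓝 l)) (hz : φ z ≠ l) :
    ∃ w < z, deriv φ w ≠ 0 := by
  by_contra! hzero
  have hconst : ∀ w < z, φ w = φ z := fun w hw => by
    obtain ⟨v, hv, hslope⟩ := exists_deriv_eq_slope φ hw hφ.continuous.continuousOn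
      hφ.differentiableOn
    rw [hzero v hv.2, eq_comm, div_eq_zero_iff, sub_eq_zero, sub_eq_zero] at hslope
    exact hslope.resolve_right hw.ne' |>.symm
  have hlim' : Tendsto φ atBot (𝓝 (φ z)) :=
    tendsto_const_nhds.congr' <| (eventually_lt_atBot z).mono fun w hw => (hconst w hw).symm
  exact hz (tendsto_nhds_unique hlim' hlim)

lemma Antitone.neg_of_nonpos_of_hasDerivAt_ne_zero {E : ℝ → ℝ} {e w z : ℝ} (hanti : Antitone E)
    (hnonpos : ∀ v, E v ≤ 0) (hE : HasDerivAt E e w) (he : e ≠ 0) (hwz : w < z) : E z < 0 := by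
  by_contra! hz
  have hzero : ∀ v ≤ z, E v = 0 := fun v hv => le_antisymm (hnonpos v) (hz.trans (hanti hv))
  have hE₀ : HasDerivAt E 0 w := (hasDerivAt_const w (0 : ℝ)).congr_of_eventuallyEq <| by
    filter_upwards [Iio_mem_nhds hwz] with v hv using hzero v hv.le
  exact he (hE.unique hE₀)

noncomputable def frontEnergy (f φ : ℝ → ℝ) (z : ℝ) : ℝ :=
  deriv φ z ^ 2 / 2 - ∫ s in φ z..1, f s

section FrontEnergy

variable {f φ : ℝ → ℝ}

lemma neg_frontEnergy_le_integral (z : ℝ) : -frontEnergy f φ z ≤ ∫ s in φ z..1, f s := by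
  have := sq_nonneg (deriv φ z)
  rw [frontEnergy]
  linarith

lemma hasDerivAt_frontEnergy {c z : ℝ} (hf : ContinuousOn f (Icc 0 1)) (hz : φ z ∈ Ioo 0 1)
    (hφ : DifferentiableAt ℝ φ z) (hφ' : DifferentiableAt ℝ (deriv φ) z)
    (heq : deriv (deriv φ) z + c * deriv φ z + f (φ z) = 0) :
    HasDerivAt (frontEnergy f φ) (-(c * deriv φ z ^ 2)) z := by
  have hG : HasDerivAt (fun u => ∫ s in u..1, f s) (-f (φ z)) (φ z) :=
    intervalIntegral.integral_hasDerivAt_left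
      (hf.mono (uIcc_subset_Icc ⟨hz.1.le, hz.2.le⟩ ⟨zero_le_one, le_rfl⟩)).intervalIntegrable
      ((hf.mono Ioo_subset_Icc_self).stronglyMeasurableAtFilter isOpen_Ioo _ hz)
      (hf.continuousAt (Icc_mem_nhds hz.1 hz.2))
  refine (((hφ'.hasDerivAt.pow 2).div_const 2).sub (hG.comp z hφ.hasDerivAt)).congr_deriv ?_
  linear_combination deriv φ z * heq

lemma frontEnergy_nonpos (hf : ContinuousOn f (Icc 0 1)) (hφ : Differentiable ℝ φ)
    (hrange : ∀ z, φ z ∈ Ioo 0 1) (hlim : Tendsto φ atBot (𝓝 1))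
    (hanti : Antitone (frontEnergy f φ)) (z : ℝ) : frontEnergy f φ z ≤ 0 := by
  refine le_of_forall_pos_lt_add fun ε hε => ?_
  have hG : Tendsto (fun w => ∫ s in φ w..1, f s) atBot (𝓝 0) := by
    simpa using tendsto_integral_comp_of_continuousOn hf ⟨zero_le_one, le_rfl⟩ hlim
      (Eventually.of_forall fun w => Ioo_subset_Icc_self (hrange w))
  obtain ⟨W, hW⟩ := eventually_atBot.1 <|
    hG.eventually (eventually_gt_nhds (neg_lt_zero.2 (half_pos hε)))
  obtain ⟨w, hw, hsmall⟩ :=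
    exists_lt_abs_deriv_lt_of_forall_mem_Ioo hφ hrange (Real.sqrt_pos.2 hε) (min W z)
  have hsq : deriv φ w ^ 2 < ε := by
    rwa [← sq_abs, ← Real.lt_sqrt (abs_nonneg _)]
  have hGw := hW w (hw.le.trans (min_le_left _ _))
  calc frontEnergy f φ z ≤ frontEnergy f φ w := hanti (hw.le.trans (min_le_right _ _))
    _ < 0 + ε := by rw [frontEnergy]; linarith

lemma exists_neg_frontEnergy_le_integral (hf : ContinuousOn f (Icc 0 1)) (hφ : Continuous φ)
    (hrange : ∀ z, φ z ∈ Ioo 0 1) (hlim1 : Tendsto φ atBot (𝓝 1))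
    (hlim0 : Tendsto φ atTop (𝓝 0)) (hanti : Antitone (frontEnergy f φ)) {t : ℝ}
    (ht : t ∈ Ico 0 1) : ∃ z, -frontEnergy f φ z ≤ ∫ s in t..1, f s := by
  rcases ht.1.eq_or_lt with rfl | ht₀
  · have hG := tendsto_integral_comp_of_continuousOn hf ⟨le_rfl, zero_le_one⟩ hlim0
      (Eventually.of_forall fun w => Ioo_subset_Icc_self (hrange w))
    refine ⟨0, ge_of_tendsto hG ?_⟩
    filter_upwards [eventually_ge_atTop 0] with w hw
    exact (neg_le_neg (hanti hw)).trans (neg_frontEnergy_le_integral w)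
  · obtain ⟨z, rfl⟩ : t ∈ range φ := mem_range_of_exists_le_of_exists_ge hφ
      ((hlim0.eventually (eventually_lt_nhds ht₀)).exists.imp fun _ => le_of_lt)
      ((hlim1.eventually (eventually_gt_nhds ht.2)).exists.imp fun _ => le_of_lt)
    exact ⟨z, neg_frontEnergy_le_integral z⟩

end FrontEnergy

theorem integral_pos_of_front_general (f : ℝ → ℝ) (hf : ContDiffOn ℝ 1 f (Set.Icc 0 1))
    (c₀ : ℝ) (hc₀ : 0 < c₀)
    (φ₀ : ℝ → ℝ) (hφ : ContDiff ℝ 2 φ₀)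
    (heq : ∀ z : ℝ, deriv (deriv φ₀) z + c₀ * deriv φ₀ z + f (φ₀ z) = 0)
    (hlim1 : Filter.Tendsto φ₀ Filter.atBot (nhds 1))
    (hlim0 : Filter.Tendsto φ₀ Filter.atTop (nhds 0))
    (hrange : ∀ z : ℝ, 0 < φ₀ z ∧ φ₀ z < 1) :
    ∀ t ∈ Set.Ico (0:ℝ) 1, 0 < ∫ s in t..1, f s := by
  have hfc : ContinuousOn f (Icc 0 1) := hf.continuousOn
  have hφd : Differentiable ℝ φ₀ := hφ.differentiable two_ne_zero
  have hφ'd : Differentiable ℝ (deriv φ₀) :=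
    (contDiff_succ_iff_deriv.1 hφ).2.2.differentiable one_ne_zero
  have hE z : HasDerivAt (frontEnergy f φ₀) (-(c₀ * deriv φ₀ z ^ 2)) z :=
    hasDerivAt_frontEnergy hfc (hrange z) (hφd z) (hφ'd z) (heq z)
  have hanti : Antitone (frontEnergy f φ₀) :=
    antitone_of_deriv_nonpos (fun z => (hE z).differentiableAt) fun z => by
      rw [(hE z).deriv]
      exact neg_nonpos.2 (mul_nonneg hc₀.le (sq_nonneg _))
  have hneg z : frontEnergy f φ₀ z < 0 := by
    obtain ⟨w, hwz, hw⟩ := exists_lt_deriv_ne_zero_of_tendsto_atBot hφd hlim1 (hrange z).2.ne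
    exact hanti.neg_of_nonpos_of_hasDerivAt_ne_zero
      (frontEnergy_nonpos hfc hφd hrange hlim1 hanti) (hE w) (by simpa [hc₀.ne'] using hw) hwz
  intro t ht
  obtain ⟨z, hz⟩ :=
    exists_neg_frontEnergy_le_integral hfc hφd.continuous hrange hlim1 hlim0 hanti ht
  linarith [hneg z]

/-- if the equation admits a traveling front connecting `1` to `0` with
positive speed `c₀`, then `∫_t¹ f(s) ds > 0` for every `t ∈ [0,1)`. -/
theorem integral_pos_of_front (f : ℝ → ℝ) (hf : ContDiffOn ℝ 1 f (Set.Icc 0 1))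
    (hf0 : f 0 = 0) (hf1 : f 1 = 0) (c₀ : ℝ) (hc₀ : 0 < c₀)
    (φ₀ : ℝ → ℝ) (hφ : ContDiff ℝ 2 φ₀)
    (heq : ∀ z : ℝ, deriv (deriv φ₀) z + c₀ * deriv φ₀ z + f (φ₀ z) = 0)
    (hlim1 : Filter.Tendsto φ₀ Filter.atBot (nhds 1))
    (hlim0 : Filter.Tendsto φ₀ Filter.atTop (nhds 0))
    (hrange : ∀ z : ℝ, 0 < φ₀ z ∧ φ₀ z < 1) :
    ∀ t ∈ Set.Ico (0:ℝ) 1, 0 < ∫ s in t..1, f s :=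
  integral_pos_of_front_general f hf c₀ hc₀ φ₀ hφ heq hlim1 hlim0 hrange
end
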